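/- arXiv:0710.2434 — 6 statements merged into one kernel-verified Lean document; each statement's English description precedes it below -/
import Mathlib

section
/- Let c=(c_i,c_j,0)∈ℝ³ with (c_i,c_j)≠(0,0). Then the kernel of J(c) is the span of {(c_i,c_j,0,0,0),(0,0,1,0,0),(0,0,0,1,0)} and the kernel of J'(c) is the span of {(1,0,0,0,0),(0,1,0,0,0),(0,0,c_i,c_j,0)}. -/
theorem stmt_3 (ci cj : ℝ) (hc : (ci, cj) ≠ (0, 0))
    (J : Matrix (Fin 5) (Fin 5) ℝ) (J' : Matrix (Fin 5) (Fin 5) ℝ)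
    (hJ : J = !![0, 0, 0, 0, cj;
                 0, 0, 0, 0, -ci;
                 0, 0, 0, 0, 0;
                 0, 0, 0, 0, 0;
                 -cj, ci, 0, 0, 0])
    (hJ' : J' = !![0, 0, 0, 0, 0;
                   0, 0, 0, 0, 0;
                   0, 0, 0, 0, cj;
                   0, 0, 0, 0, -ci;
                   0, 0, -cj, ci, 0]) :
    LinearMap.ker (Matrix.mulVecLin J) =
      Submodule.span ℝ {![ci, cj, 0, 0, 0], ![(0 : ℝ), 0, 1, 0, 0], ![(0 : ℝ), 0, 0, 1, 0]} ∧
    LinearMap.ker (Matrix.mulVecLin J') =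
      Submodule.span ℝ {![(1 : ℝ), 0, 0, 0, 0], ![(0 : ℝ), 1, 0, 0, 0], ![(0 : ℝ), 0, ci, cj, 0]} := by
  subst hJ hJ'
  have hs : ci^2 + cj^2 ≠ 0 := by
    intro h
    apply hc
    have h1 : ci = 0 := by nlinarith [sq_nonneg ci, sq_nonneg cj]
    have h2 : cj = 0 := by nlinarith [sq_nonneg ci, sq_nonneg cj]
    simp [h1, h2]
  constructor
  · apply le_antisymm
    · intro v hv
      rw [LinearMap.mem_ker] at hv
      have e0 := congrFun hv 0
      have e1 := congrFun hv 1
      have e4 := congrFun hv 4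
      simp [Matrix.mulVecLin, Matrix.mulVec, dotProduct, Fin.sum_univ_five] at e0 e1 e4
      have hv4 : v 4 = 0 := by
        rcases e0 with h | h
        · rcases e1 with h' | h'
          · exact absurd (by simp [h, h']) hc
          · exact h'
        · exact h
      have hveq : v = ((ci * v 0 + cj * v 1)/(ci^2+cj^2)) • ![ci, cj, 0, 0, 0]
          + v 2 • ![(0 : ℝ), 0, 1, 0, 0] + v 3 • ![(0 : ℝ), 0, 0, 1, 0] := by
        funext i
        fin_cases i
        · simp; field_simp; linear_combination (-cj) * e4
        · simp; field_simp; linear_combination ci * e4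
        · simp
        · simp
        · simp [hv4]
      rw [hveq]
      refine Submodule.add_mem _ (Submodule.add_mem _ ?_ ?_) ?_ <;>
        exact Submodule.smul_mem _ _ (Submodule.subset_span (by simp))
    · rw [Submodule.span_le]
      rintro x hx
      simp only [Set.mem_insert_iff, Set.mem_singleton_iff] at hx
      rcases hx with rfl | rfl | rfl <;>
      · rw [SetLike.mem_coe, LinearMap.mem_ker]
        funext i
        fin_cases i <;>
          simp [Matrix.mulVecLin, Matrix.mulVec, dotProduct, Fin.sum_univ_five] <;> ring
  · apply le_antisymm
    · intro v hv
      rw [LinearMap.mem_ker] at hv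
      have e2 := congrFun hv 2
      have e3 := congrFun hv 3
      have e4 := congrFun hv 4
      simp [Matrix.mulVecLin, Matrix.mulVec, dotProduct, Fin.sum_univ_five] at e2 e3 e4
      have hv4 : v 4 = 0 := by
        rcases e2 with h | h
        · rcases e3 with h' | h'
          · exact absurd (by simp [h, h']) hc
          · exact h'
        · exact h
      have hveq : v = v 0 • ![(1 : ℝ), 0, 0, 0, 0] + v 1 • ![(0 : ℝ), 1, 0, 0, 0]
          + ((ci * v 2 + cj * v 3)/(ci^2+cj^2)) • ![(0 : ℝ), 0, ci, cj, 0] := by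
        funext i
        fin_cases i
        · simp
        · simp
        · simp; field_simp; linear_combination (-cj) * e4
        · simp; field_simp; linear_combination ci * e4
        · simp [hv4]
      rw [hveq]
      refine Submodule.add_mem _ (Submodule.add_mem _ ?_ ?_) ?_ <;>
        exact Submodule.smul_mem _ _ (Submodule.subset_span (by simp))
    · rw [Submodule.span_le]
      rintro x hx
      simp only [Set.mem_insert_iff, Set.mem_singleton_iff] at hx
      rcases hx with rfl | rfl | rfl <;>
      · rw [SetLike.mem_coe, LinearMap.mem_ker]
        funext i
        fin_cases i <;>
          simp [Matrix.mulVecLin, Matrix.mulVec, dotProduct, Fin.sum_univ_five] <;> ring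
end

section
/- Let c=(c_i,c_j,c_k)∈ℝ³, Z=Z_c, and define E₁(Z)=c_iX_i+c_jX_j, E₂(Z)=−c_jY_i+c_iY_j, E₃(Z)=|c|(c_jX_i−c_iX_j), E₄(Z)=c_k(c_iY_i+c_jY_j)−(c_i²+c_j²)Y_k, Y(Z)=c_iY_i+c_jY_j+c_kY_k. Then j(Z)E₁(Z)=c_kE₂(Z), j(Z)E₂(Z)=−c_kE₁(Z), j(Z)E₃(Z)=|c|E₄(Z), j(Z)E₄(Z)=−|c|E₃(Z), and j(Z)Y(Z)=0. -/
theorem stmt_5 (ci cj ck : ℝ)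
    (J : Matrix (Fin 5) (Fin 5) ℝ)
    (hJ : J = !![0, 0, 0, -ck, cj;
                 0, 0, ck, 0, -ci;
                 0, -ck, 0, 0, 0;
                 ck, 0, 0, 0, 0;
                 -cj, ci, 0, 0, 0])
    (nc : ℝ) (hnc : nc = Real.sqrt (ci ^ 2 + cj ^ 2 + ck ^ 2))
    (E1 E2 E3 E4 Y : Fin 5 → ℝ)
    (hE1 : E1 = ![ci, cj, 0, 0, 0])
    (hE2 : E2 = ![0, 0, -cj, ci, 0])
    (hE3 : E3 = nc • ![cj, -ci, 0, 0, 0])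
    (hE4 : E4 = ![0, 0, ck * ci, ck * cj, -(ci ^ 2 + cj ^ 2)])
    (hY : Y = ![0, 0, ci, cj, ck]) :
    J.mulVec E1 = ck • E2 ∧
    J.mulVec E2 = -ck • E1 ∧
    J.mulVec E3 = nc • E4 ∧
    J.mulVec E4 = -nc • E3 ∧
    J.mulVec Y = 0 := by
  have hnc2 : nc * nc = ci ^ 2 + cj ^ 2 + ck ^ 2 := by
    rw [hnc]; exact Real.mul_self_sqrt (by positivity)
  subst hJ hE1 hE2 hE3 hE4 hY
  refine ⟨?_, ?_, ?_, ?_, ?_⟩ <;>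
      funext i <;> fin_cases i <;>
      simp [Matrix.mulVec, dotProduct, Fin.sum_univ_five]
  all_goals first
    | ring1
    | linear_combination (cj : ℝ) * hnc2
    | linear_combination (-cj : ℝ) * hnc2
    | linear_combination (ci : ℝ) * hnc2
    | linear_combination (-ci : ℝ) * hnc2
end

section
/- Let c=(c_i,c_j,c_k)∈ℝ³ with c_k≠0 and c_i²+c_j²>0, Z=Z_c. Then {E₁(Z),E₂(Z)} is a basis of the eigenspace of j(Z)² for the eigenvalue −c_k², {E₃(Z),E₄(Z)} is a basis of the eigenspace for the eigenvalue −|c|², and Y(Z) spans the kernel of j(Z). -/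
/-! On the planes span {E₁, E₂} and span {E₃, E₄}, j(Z) acts as a rotation generator:
j E₁ = c_k E₂, j E₂ = -c_k E₁, j E₃ = |c| E₄, j E₄ = -|c| E₃; moreover j Y = 0. Hence the
two planes lie in the eigenspaces of j² for -c_k² and -|c|², and Y in ker j ⊆ ker j². These
three eigenvalues are distinct, so the eigenspaces are independent, and since 2 + 2 + 1 = 5
already fills ℝ⁵, each inclusion is an equality. -/

open Module

theorem iSupIndep.sum_finrank_le {K V ι : Type*} [Field K] [AddCommGroup V] [Module K V]
    [FiniteDimensional K V] [Fintype ι] [DecidableEq ι] {p : ι → Submodule K V}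
    (hp : iSupIndep p) : ∑ i, finrank K (p i) ≤ finrank K V := by
  rw [← Module.finrank_directSum]
  exact LinearMap.finrank_le_finrank_of_injective hp.dfinsupp_lsum_injective

theorem iSupIndep.eq_of_le_of_finrank_le_sum {K V ι : Type*} [Field K] [AddCommGroup V]
    [Module K V] [FiniteDimensional K V] [Fintype ι] {p W : ι → Submodule K V}
    (hp : iSupIndep p) (hW : ∀ i, W i ≤ p i) (hdim : finrank K V ≤ ∑ i, finrank K (W i))
    (i : ι) : W i = p i := by
  classical
  have hle : ∀ j, finrank K (W j) ≤ finrank K (p j) := fun j => Submodule.finrank_mono (hW j)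
  have hsum : ∑ j, finrank K (W j) = ∑ j, finrank K (p j) :=
    le_antisymm (Finset.sum_le_sum fun j _ => hle j) (hp.sum_finrank_le.trans hdim)
  exact Submodule.eq_of_le_of_finrank_eq (hW i)
    ((Finset.sum_eq_sum_iff_of_le fun j _ => hle j).mp hsum i (Finset.mem_univ i))

theorem Module.End.eigenspace_eq_of_le_of_finrank_le_sum {K V ι : Type*} [Field K]
    [AddCommGroup V] [Module K V] [FiniteDimensional K V] [Fintype ι] {f : End K V}
    {μ : ι → K} (hμ : Function.Injective μ) {W : ι → Submodule K V}
    (hW : ∀ i, W i ≤ f.eigenspace (μ i)) (hdim : finrank K V ≤ ∑ i, finrank K (W i))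
    (i : ι) : f.eigenspace (μ i) = W i :=
  ((f.eigenspaces_iSupIndep.comp hμ).eq_of_le_of_finrank_le_sum hW hdim i).symm

theorem LinearIndependent.finrank_span_pair {K V : Type*} [DivisionRing K] [AddCommGroup V]
    [Module K V] {u v : V} (h : LinearIndependent K ![u, v]) :
    finrank K (Submodule.span K {u, v}) = 2 := by
  have h2 := finrank_span_eq_card h
  rwa [Matrix.range_cons_cons_empty, Fintype.card_fin] at h2

namespace Module.End

variable {K V : Type*} [Field K] [AddCommGroup V] [Module K V] {f : End K V} {u v : V}
  {a : K}

theorem mem_eigenspace_mul_self_of_rotation (hu : f u = a • v) (hv : f v = -a • u) :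
    u ∈ (f * f).eigenspace (-a ^ 2) := by
  rw [mem_eigenspace_iff, mul_apply, hu, map_smul, hv, smul_smul]
  ring_nf

theorem span_pair_le_eigenspace_of_rotation (hu : f u = a • v) (hv : f v = -a • u) :
    Submodule.span K {u, v} ≤ (f * f).eigenspace (-a ^ 2) := by
  have hv_mem : v ∈ (f * f).eigenspace (-(-a) ^ 2) :=
    mem_eigenspace_mul_self_of_rotation hv (by rwa [neg_neg])
  rw [neg_sq] at hv_mem
  rw [Submodule.span_le, Set.insert_subset_iff, Set.singleton_subset_iff]
  exact ⟨mem_eigenspace_mul_self_of_rotation hu hv, hv_mem⟩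

theorem linearIndependent_pair_of_rotation [LinearOrder K] [IsStrictOrderedRing K]
    (hu : f u = a • v) (hv : f v = -a • u) (ha : a ≠ 0) (hu0 : u ≠ 0) :
    LinearIndependent K ![u, v] := by
  rw [LinearIndependent.pair_iff]
  intro s t h
  have hsv : s • v = t • u := by
    have hf := congrArg f h
    rw [map_add, map_smul, map_smul, hu, hv, map_zero] at hf
    have had : a • (s • v - t • u) = 0 := by linear_combination (norm := module) hf
    exact sub_eq_zero.mp ((smul_eq_zero.mp had).resolve_left ha)
  have hsq : (s ^ 2 + t ^ 2) • u = 0 := by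
    calc (s ^ 2 + t ^ 2) • u = s • (s • u + t • v) := by
          linear_combination (norm := module) (-t) • hsv
      _ = 0 := by rw [h, smul_zero]
  have h0 : s ^ 2 + t ^ 2 = 0 := (smul_eq_zero.mp hsq).resolve_right hu0
  constructor <;> nlinarith [sq_nonneg s, sq_nonneg t]

theorem eigenspaces_mul_self_of_rotations [LinearOrder K] [IsStrictOrderedRing K]
    [FiniteDimensional K V] (hV : finrank K V ≤ 5) {b : K} {u' v' y : V}
    (hu : f u = a • v) (hv : f v = -a • u) (hu' : f u' = b • v') (hv' : f v' = -b • u')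
    (hy : f y = 0) (ha : a ≠ 0) (hb : b ≠ 0) (hab : a ^ 2 ≠ b ^ 2) (hu0 : u ≠ 0) (hu'0 : u' ≠ 0)
    (hy0 : y ≠ 0) :
    (f * f).eigenspace (-a ^ 2) = Submodule.span K {u, v} ∧
      (f * f).eigenspace (-b ^ 2) = Submodule.span K {u', v'} ∧
      LinearMap.ker f = Submodule.span K {y} := by
  have hμ : Function.Injective ![-a ^ 2, -b ^ 2, 0] := by
    intro i j h
    fin_cases i <;> fin_cases j <;> simp [ha, hb, hab, hab.symm] at h ⊢
  have hker : LinearMap.ker f ≤ (f * f).eigenspace 0 := by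
    rw [eigenspace_zero]; exact LinearMap.ker_le_ker_comp f f
  have hW : ∀ i, ![Submodule.span K {u, v}, Submodule.span K {u', v'}, Submodule.span K {y}] i ≤
      (f * f).eigenspace (![-a ^ 2, -b ^ 2, 0] i) := by
    intro i
    fin_cases i
    · exact span_pair_le_eigenspace_of_rotation hu hv
    · exact span_pair_le_eigenspace_of_rotation hu' hv'
    · exact (Submodule.span_singleton_le_iff_mem _ _).2 (hker hy)
  have key := eigenspace_eq_of_le_of_finrank_le_sum hμ hW (by
    rw [Fin.sum_univ_three]
    -- `![…] i` does not reduce under `finrank` by rewriting, as the instances depend on it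
    change _ ≤ finrank K (Submodule.span K {u, v}) + finrank K (Submodule.span K {u', v'}) +
      finrank K (Submodule.span K {y})
    rw [(linearIndependent_pair_of_rotation hu hv ha hu0).finrank_span_pair,
      (linearIndependent_pair_of_rotation hu' hv' hb hu'0).finrank_span_pair,
      finrank_span_singleton hy0]
    exact hV)
  refine ⟨key 0, key 1, le_antisymm (hker.trans (key 2).le) ?_⟩
  exact (Submodule.span_singleton_le_iff_mem _ _).2 hy

end Module.End

theorem vec5_ne_zero_of_sq_add_sq_pos {a b : ℝ} (h : 0 < a ^ 2 + b ^ 2) :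
    ![a, b, 0, 0, 0] ≠ 0 := by
  intro h0
  have ha : a = 0 := congrFun h0 0
  have hb : b = 0 := congrFun h0 1
  simp [ha, hb] at h

def jMatrix (ci cj ck : ℝ) : Matrix (Fin 5) (Fin 5) ℝ :=
  !![0, 0, 0, -ck, cj;
     0, 0, ck, 0, -ci;
     0, -ck, 0, 0, 0;
     ck, 0, 0, 0, 0;
     -cj, ci, 0, 0, 0]

section jMatrix

open Matrix

variable (ci cj ck : ℝ)

theorem mulVecLin_jMatrix_E1 :
    (jMatrix ci cj ck).mulVecLin ![ci, cj, 0, 0, 0] = ck • ![0, 0, -cj, ci, 0] := by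
  ext i; fin_cases i <;> simp [jMatrix, mulVec, dotProduct, Fin.sum_univ_five]; ring

theorem mulVecLin_jMatrix_E2 :
    (jMatrix ci cj ck).mulVecLin ![0, 0, -cj, ci, 0] = -ck • ![ci, cj, 0, 0, 0] := by
  ext i; fin_cases i <;> simp [jMatrix, mulVec, dotProduct, Fin.sum_univ_five]

theorem mulVecLin_jMatrix_E3 (n : ℝ) :
    (jMatrix ci cj ck).mulVecLin (n • ![cj, -ci, 0, 0, 0]) =
      n • ![0, 0, ck * ci, ck * cj, -(ci ^ 2 + cj ^ 2)] := by
  ext i; fin_cases i <;> simp [jMatrix, mulVec, dotProduct, Fin.sum_univ_five] <;> ring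

theorem mulVecLin_jMatrix_E4 {n : ℝ} (hn : n ^ 2 = ci ^ 2 + cj ^ 2 + ck ^ 2) :
    (jMatrix ci cj ck).mulVecLin ![0, 0, ck * ci, ck * cj, -(ci ^ 2 + cj ^ 2)] =
      -n • n • ![cj, -ci, 0, 0, 0] := by
  rw [smul_smul, neg_mul, ← sq, hn]
  ext i; fin_cases i <;> simp [jMatrix, mulVec, dotProduct, Fin.sum_univ_five] <;> ring

theorem mulVecLin_jMatrix_Y : (jMatrix ci cj ck).mulVecLin ![0, 0, ci, cj, ck] = 0 := by
  ext i; fin_cases i <;> simp [jMatrix, mulVec, dotProduct, Fin.sum_univ_five] <;> ring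

end jMatrix

theorem stmt_6 (ci cj ck : ℝ) (hck : ck ≠ 0) (hij : ci ^ 2 + cj ^ 2 > 0)
    (J : Matrix (Fin 5) (Fin 5) ℝ)
    (hJ : J = !![0, 0, 0, -ck, cj;
                 0, 0, ck, 0, -ci;
                 0, -ck, 0, 0, 0;
                 ck, 0, 0, 0, 0;
                 -cj, ci, 0, 0, 0])
    (nc : ℝ) (hnc : nc = Real.sqrt (ci ^ 2 + cj ^ 2 + ck ^ 2))
    (E1 E2 E3 E4 Y : Fin 5 → ℝ)
    (hE1 : E1 = ![ci, cj, 0, 0, 0])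
    (hE2 : E2 = ![0, 0, -cj, ci, 0])
    (hE3 : E3 = nc • ![cj, -ci, 0, 0, 0])
    (hE4 : E4 = ![0, 0, ck * ci, ck * cj, -(ci ^ 2 + cj ^ 2)])
    (hY : Y = ![0, 0, ci, cj, ck]) :
    (Module.End.eigenspace (Matrix.mulVecLin (J * J)) (-ck ^ 2) =
        Submodule.span ℝ {E1, E2} ∧ LinearIndependent ℝ ![E1, E2]) ∧
    (Module.End.eigenspace (Matrix.mulVecLin (J * J)) (-nc ^ 2) =
        Submodule.span ℝ {E3, E4} ∧ LinearIndependent ℝ ![E3, E4]) ∧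
    (LinearMap.ker (Matrix.mulVecLin J) = Submodule.span ℝ {Y} ∧ Y ≠ 0) := by
  have hnc2 : nc ^ 2 = ci ^ 2 + cj ^ 2 + ck ^ 2 := hnc ▸ Real.sq_sqrt (by positivity)
  have hnc0 : nc ≠ 0 := by rintro rfl; nlinarith
  change J = jMatrix ci cj ck at hJ
  subst hJ
  set f : Module.End ℝ (Fin 5 → ℝ) := (jMatrix ci cj ck).mulVecLin
  have hf1 : f E1 = ck • E2 := by rw [hE1, hE2]; exact mulVecLin_jMatrix_E1 ci cj ck
  have hf2 : f E2 = -ck • E1 := by rw [hE1, hE2]; exact mulVecLin_jMatrix_E2 ci cj ck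
  have hf3 : f E3 = nc • E4 := by rw [hE3, hE4]; exact mulVecLin_jMatrix_E3 ci cj ck nc
  have hf4 : f E4 = -nc • E3 := by rw [hE3, hE4]; exact mulVecLin_jMatrix_E4 ci cj ck hnc2
  have hfY : f Y = 0 := by rw [hY]; exact mulVecLin_jMatrix_Y ci cj ck
  have hE1_ne : E1 ≠ 0 := hE1 ▸ vec5_ne_zero_of_sq_add_sq_pos hij
  have hE3_ne : E3 ≠ 0 :=
    hE3 ▸ smul_ne_zero hnc0 (vec5_ne_zero_of_sq_add_sq_pos (by rwa [neg_sq, add_comm]))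
  have hY0 : Y ≠ 0 := fun h => hck (by simpa [hY] using congrFun h 4)
  have hab : ck ^ 2 ≠ nc ^ 2 := by rw [hnc2]; linarith
  obtain ⟨h12, h34, hker⟩ := Module.End.eigenspaces_mul_self_of_rotations
    (Module.finrank_fin_fun ℝ).le hf1 hf2 hf3 hf4 hfY hck hnc0 hab hE1_ne hE3_ne hY0
  rw [Matrix.mulVecLin_mul, ← Module.End.mul_eq_comp]
  exact ⟨⟨h12, Module.End.linearIndependent_pair_of_rotation hf1 hf2 hck hE1_ne⟩,
    ⟨h34, Module.End.linearIndependent_pair_of_rotation hf3 hf4 hnc0 hE3_ne⟩, hker, hY0⟩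
end

section
/- Let c=(c_i,c_j,c_k)∈ℝ³, Z=Z_c, and define E'₁(Z)=X_i, E'₂(Z)=X_j, E'₃(Z)=|c|(c_jY_i−c_iY_j), E'₄(Z)=c_k(c_iY_i+c_jY_j)−(c_i²+c_j²)Y_k, Y(Z)=c_iY_i+c_jY_j+c_kY_k. Then j'(Z)E'₁(Z)=c_kE'₂(Z), j'(Z)E'₂(Z)=−c_kE'₁(Z), j'(Z)E'₃(Z)=|c|E'₄(Z), j'(Z)E'₄(Z)=−|c|E'₃(Z), and j'(Z)Y(Z)=0. -/
theorem stmt_9 (ci cj ck : ℝ)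
    (J' : Matrix (Fin 5) (Fin 5) ℝ)
    (hJ' : J' = !![0, -ck, 0, 0, 0;
                   ck, 0, 0, 0, 0;
                   0, 0, 0, -ck, cj;
                   0, 0, ck, 0, -ci;
                   0, 0, -cj, ci, 0])
    (nc : ℝ) (hnc : nc = Real.sqrt (ci ^ 2 + cj ^ 2 + ck ^ 2))
    (E1 E2 E3 E4 Y : Fin 5 → ℝ)
    (hE1 : E1 = ![1, 0, 0, 0, 0])
    (hE2 : E2 = ![0, 1, 0, 0, 0])
    (hE3 : E3 = nc • ![0, 0, cj, -ci, 0])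
    (hE4 : E4 = ![0, 0, ck * ci, ck * cj, -(ci ^ 2 + cj ^ 2)])
    (hY : Y = ![0, 0, ci, cj, ck]) :
    J'.mulVec E1 = ck • E2 ∧
    J'.mulVec E2 = -ck • E1 ∧
    J'.mulVec E3 = nc • E4 ∧
    J'.mulVec E4 = -nc • E3 ∧
    J'.mulVec Y = 0 := by
  have hnc2 : nc ^ 2 = ci ^ 2 + cj ^ 2 + ck ^ 2 := by
    rw [hnc, Real.sq_sqrt]; positivity
  subst hJ' hE1 hE2 hE3 hE4 hY
  refine ⟨?_, ?_, ?_, ?_, ?_⟩ <;>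
    funext i <;> fin_cases i <;>
    simp [Matrix.mulVec, dotProduct, Fin.sum_univ_five] <;>
    ring_nf <;> rw [hnc2] <;> ring
end

section
/- In the Lie algebra 𝔫' of Example 2.6 (with brackets [X_a,X_b]'=Z_{ab}, [Y_a,Y_b]'=Z_{ab} for a≠b in {i,j,k}, quaternion multiplication convention Z_{−c}=−Z_c, expressions involving X_k ignored, all other basis brackets zero), a functional (V+Z_c)* is regular (i.e., ker j'(Z_c)⊕𝔷 has minimal dimension 4) if and only if c_k≠0; in that case 𝔫'_{(V+Z_c)*} = span{Y_c} ⊕ 𝔷 where Y_c=c_iY_i+c_jY_j+c_kY_k. -/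
open Module

private def subProdEquiv {R M N : Type*} [CommRing R] [AddCommGroup M] [AddCommGroup N]
    [Module R M] [Module R N] (p : Submodule R M) (q : Submodule R N) :
    (p.prod q) ≃ₗ[R] p × q where
  toFun x := (⟨x.1.1, x.2.1⟩, ⟨x.1.2, x.2.2⟩)
  invFun x := ⟨(x.1.1, x.2.1), x.1.2, x.2.2⟩
  map_add' _ _ := rfl
  map_smul' _ _ := rfl
  left_inv _ := rfl
  right_inv _ := rfl

private lemma finrank_subprod {M N : Type*} [AddCommGroup M] [AddCommGroup N]
    [Module ℝ M] [Module ℝ N] [FiniteDimensional ℝ M] [FiniteDimensional ℝ N]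
    (p : Submodule ℝ M) (q : Submodule ℝ N) :
    finrank ℝ (p.prod q) = finrank ℝ p + finrank ℝ q := by
  rw [(subProdEquiv p q).finrank_eq, finrank_prod]

private lemma mem_ker_iff (c : Fin 3 → ℝ) (v : Fin 5 → ℝ) :
    v ∈ LinearMap.ker (Matrix.mulVecLin
      !![0, -(c 2), 0, 0, 0;
         c 2, 0, 0, 0, 0;
         0, 0, 0, -(c 2), c 1;
         0, 0, c 2, 0, -(c 0);
         0, 0, -(c 1), c 0, 0]) ↔
    (-(c 2) * v 1 = 0 ∧ c 2 * v 0 = 0 ∧ -(c 2) * v 3 + c 1 * v 4 = 0 ∧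
      c 2 * v 2 + -(c 0) * v 4 = 0 ∧ -(c 1) * v 2 + c 0 * v 3 = 0) := by
  rw [LinearMap.mem_ker, Matrix.mulVecLin_apply, funext_iff]
  constructor
  · intro h
    have h0 := h 0; have h1 := h 1; have h2 := h 2; have h3 := h 3; have h4 := h 4
    simp [Matrix.mulVec, dotProduct, Fin.sum_univ_five, -mul_eq_zero,
      -neg_mul] at h0 h1 h2 h3 h4
    refine ⟨by linarith, by linarith, by linarith, by linarith, by linarith⟩
  · rintro ⟨h1, h2, h3, h4, h5⟩ i
    fin_cases i <;>
      simp [Matrix.mulVec, dotProduct, Fin.sum_univ_five, -mul_eq_zero, -neg_mul] <;>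
      linarith

private lemma ker_eq_span (c : Fin 3 → ℝ) (hc : c 2 ≠ 0) :
    LinearMap.ker (Matrix.mulVecLin
      !![0, -(c 2), 0, 0, 0;
         c 2, 0, 0, 0, 0;
         0, 0, 0, -(c 2), c 1;
         0, 0, c 2, 0, -(c 0);
         0, 0, -(c 1), c 0, 0]) = Submodule.span ℝ {![0, 0, c 0, c 1, c 2]} := by
  apply le_antisymm
  · intro v hv
    rw [mem_ker_iff] at hv
    obtain ⟨h1, h2, h3, h4, h5⟩ := hv
    rw [Submodule.mem_span_singleton]
    refine ⟨v 4 / c 2, funext fun i => ?_⟩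
    have hv0 : v 0 = 0 := by
      rcases mul_eq_zero.mp h2 with h | h
      exacts [absurd h hc, h]
    have hv1 : v 1 = 0 := by
      have h2' : c 2 * v 1 = 0 := by linarith
      rcases mul_eq_zero.mp h2' with h | h
      exacts [absurd h hc, h]
    fin_cases i
    · simp [hv0]
    · simp [hv1]
    · show v 4 / c 2 * c 0 = v 2
      field_simp
      linarith
    · show v 4 / c 2 * c 1 = v 3
      field_simp
      linarith
    · show v 4 / c 2 * c 2 = v 4
      field_simp
  · rw [Submodule.span_le, Set.singleton_subset_iff, SetLike.mem_coe, mem_ker_iff]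
    refine ⟨?_, ?_, ?_, ?_, ?_⟩ <;> simp <;> ring

/-- In `𝔫' = ℝ⁵ ⊕ ℝ³`, the centralizer of `(V + Z_c)*` is
`ker(j'(Z_c)) ⊕ 𝔷`; it has minimal dimension (namely 4) among all such centralizers
iff `c_k ≠ 0`, and in that case it equals `span{Y_c} ⊕ 𝔷`. -/
theorem stmt_11 (J' : (Fin 3 → ℝ) → Matrix (Fin 5) (Fin 5) ℝ)
    (hJ' : ∀ c : Fin 3 → ℝ,
      J' c = !![0, -(c 2), 0, 0, 0;
                c 2, 0, 0, 0, 0;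
                0, 0, 0, -(c 2), c 1;
                0, 0, c 2, 0, -(c 0);
                0, 0, -(c 1), c 0, 0])
    (c : Fin 3 → ℝ) (V : Fin 5 → ℝ)
    (centralizer : (Fin 3 → ℝ) → Submodule ℝ ((Fin 5 → ℝ) × (Fin 3 → ℝ)))
    (hcent : ∀ c' : Fin 3 → ℝ, centralizer c' =
      Submodule.prod (LinearMap.ker (Matrix.mulVecLin (J' c'))) ⊤) :
    ((∀ c' : Fin 3 → ℝ, finrank ℝ (centralizer c) ≤ finrank ℝ (centralizer c')) ↔
        c 2 ≠ 0) ∧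
    (c 2 ≠ 0 → finrank ℝ (centralizer c) = 4 ∧
      centralizer c =
        Submodule.prod (Submodule.span ℝ {![0, 0, c 0, c 1, c 2]})
          (⊤ : Submodule ℝ (Fin 3 → ℝ))) := by
  -- general finrank formula
  have hrk : ∀ c' : Fin 3 → ℝ, finrank ℝ (centralizer c') =
      finrank ℝ (LinearMap.ker (Matrix.mulVecLin (J' c'))) + 3 := by
    intro c'
    rw [hcent c', finrank_subprod]
    congr 1
    rw [finrank_top]
    simp
  -- finrank when c' 2 ≠ 0
  have hrk4 : ∀ c' : Fin 3 → ℝ, c' 2 ≠ 0 → finrank ℝ (centralizer c') = 4 := by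
    intro c' hc'
    rw [hrk c', hJ' c', ker_eq_span c' hc']
    rw [finrank_span_singleton]
    · intro h
      have := congrFun h 4
      simp at this
      exact hc' this
  -- lower bound : always at least 4
  have hge4 : ∀ c' : Fin 3 → ℝ, 4 ≤ finrank ℝ (centralizer c') := by
    intro c'
    rw [hrk c', hJ' c']
    have : 1 ≤ finrank ℝ (LinearMap.ker (Matrix.mulVecLin
        !![0, -(c' 2), 0, 0, 0;
           c' 2, 0, 0, 0, 0;
           0, 0, 0, -(c' 2), c' 1;
           0, 0, c' 2, 0, -(c' 0);
           0, 0, -(c' 1), c' 0, 0])) := by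
      by_cases hc' : c' 2 = 0
      · -- e₀ is in the kernel
        have hmem : (![1, 0, 0, 0, 0] : Fin 5 → ℝ) ∈ LinearMap.ker (Matrix.mulVecLin
            !![0, -(c' 2), 0, 0, 0;
               c' 2, 0, 0, 0, 0;
               0, 0, 0, -(c' 2), c' 1;
               0, 0, c' 2, 0, -(c' 0);
               0, 0, -(c' 1), c' 0, 0]) := by
          rw [mem_ker_iff]
          simp [hc']
        have hne : (![1, 0, 0, 0, 0] : Fin 5 → ℝ) ≠ 0 := by
          intro h
          have := congrFun h 0
          simp at this
        calc 1 = finrank ℝ (Submodule.span ℝ {(![1, 0, 0, 0, 0] : Fin 5 → ℝ)}) :=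
              (finrank_span_singleton hne).symm
          _ ≤ _ := Submodule.finrank_mono (by
              rw [Submodule.span_le, Set.singleton_subset_iff]; exact hmem)
      · rw [ker_eq_span c' hc', finrank_span_singleton]
        intro h
        have := congrFun h 4
        simp at this
        exact hc' this
    omega
  refine ⟨⟨fun hmin => ?_, fun hc c' => ?_⟩, fun hc => ⟨hrk4 c hc, ?_⟩⟩
  · -- minimality implies c 2 ≠ 0
    intro hc0
    have h1 : finrank ℝ (centralizer ![0, 0, 1]) = 4 := by
      apply hrk4
      simp
    -- when c 2 = 0, kernel contains the plane spanned by e₀, e₁, so finrank ≥ 5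
    have h5 : 5 ≤ finrank ℝ (centralizer c) := by
      rw [hrk c, hJ' c]
      have hind : LinearIndependent ℝ ![(![1, 0, 0, 0, 0] : Fin 5 → ℝ), ![0, 1, 0, 0, 0]] := by
        rw [LinearIndependent.pair_iff]
        intro s t hst
        have h0 := congrFun hst 0
        have h1 := congrFun hst 1
        simp at h0 h1
        exact ⟨h0, h1⟩
      have hsp : Submodule.span ℝ
          (Set.range ![(![1, 0, 0, 0, 0] : Fin 5 → ℝ), ![0, 1, 0, 0, 0]]) ≤
          LinearMap.ker (Matrix.mulVecLin
            !![0, -(c 2), 0, 0, 0;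
               c 2, 0, 0, 0, 0;
               0, 0, 0, -(c 2), c 1;
               0, 0, c 2, 0, -(c 0);
               0, 0, -(c 1), c 0, 0]) := by
        rw [Submodule.span_le]
        rintro v ⟨i, rfl⟩
        rw [SetLike.mem_coe, mem_ker_iff]
        fin_cases i <;> simp [hc0]
      have h2 : 2 ≤ finrank ℝ (LinearMap.ker (Matrix.mulVecLin
          !![0, -(c 2), 0, 0, 0;
             c 2, 0, 0, 0, 0;
             0, 0, 0, -(c 2), c 1;
             0, 0, c 2, 0, -(c 0);
             0, 0, -(c 1), c 0, 0])) := by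
        have := finrank_span_eq_card hind
        calc 2 = finrank ℝ (Submodule.span ℝ
              (Set.range ![(![1, 0, 0, 0, 0] : Fin 5 → ℝ), ![0, 1, 0, 0, 0]])) := by
              rw [this]; simp
          _ ≤ _ := Submodule.finrank_mono hsp
      omega
    have := hmin ![0, 0, 1]
    omega
  · -- c 2 ≠ 0 implies minimality
    rw [hrk4 c hc]
    exact hge4 c'
  · -- identification of the centralizer
    rw [hcent c, hJ' c, ker_eq_span c hc]
end

section
/- The set of points c=(c_i,c_j,c_k)∈ℚ³ such that |c|>|c_k|>0 and c_k/|c|∈ℚ is dense in ℝ³. -/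
/-!
Let `σ(a, b) = (1 - a² - b², 2a, 2b) / (1 + a² + b²)` be the inverse stereographic projection
from the pole `(-1, 0, 0)`. The map `(r, a, b) ↦ r • σ(a, b)` is continuous and onto `ℝ³` (the
pole's ray is reached with `r < 0`), takes rational triples to rational triples, and
`|r • σ(a, b)| = |r|`. So it maps the dense set of rational triples with nonzero coordinates onto
a dense set, on which the third coordinate `2rb / (1 + a² + b²)` is a nonzero rational multiple of
the rational norm `|r|`, smaller than it in absolute value because `a ≠ 0`.
-/

open Set

section InvStereo

variable {K : Type*} [Field K]

def invStereo (a b : K) : Fin 3 → K :=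
  ![(1 - a ^ 2 - b ^ 2) / (1 + a ^ 2 + b ^ 2), 2 * a / (1 + a ^ 2 + b ^ 2),
    2 * b / (1 + a ^ 2 + b ^ 2)]

def scaledInvStereo (p : Fin 3 → K) : Fin 3 → K := p 0 • invStereo (p 1) (p 2)

lemma scaledInvStereo_apply (p : Fin 3 → K) (i : Fin 3) :
    scaledInvStereo p i = p 0 * invStereo (p 1) (p 2) i := rfl

lemma ratCast_scaledInvStereo [CharZero K] (q : Fin 3 → ℚ) :
    (fun i => ((scaledInvStereo q i : ℚ) : K)) = scaledInvStereo (fun i => (q i : K)) := by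
  ext i
  fin_cases i <;> simp [scaledInvStereo_apply, invStereo]

variable [LinearOrder K] [IsStrictOrderedRing K]

lemma invStereo_sq_sum (a b : K) :
    invStereo a b 0 ^ 2 + invStereo a b 1 ^ 2 + invStereo a b 2 ^ 2 = 1 := by
  have : 1 + a ^ 2 + b ^ 2 ≠ 0 := by positivity
  simp only [invStereo, Matrix.cons_val]
  field_simp
  ring

lemma invStereo_of_sq_sum {u : Fin 3 → K} (hu : u 0 ^ 2 + u 1 ^ 2 + u 2 ^ 2 = 1)
    (h : 1 + u 0 ≠ 0) : invStereo (u 1 / (1 + u 0)) (u 2 / (1 + u 0)) = u := by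
  have hden : 1 + (u 1 / (1 + u 0)) ^ 2 + (u 2 / (1 + u 0)) ^ 2 = 2 / (1 + u 0) := by
    field_simp
    linear_combination hu
  have h2 : (2 : K) ≠ 0 := two_ne_zero
  ext i
  fin_cases i <;> simp [invStereo, hden] <;> field_simp
  linear_combination -hu

lemma scaledInvStereo_sq_sum (p : Fin 3 → K) :
    scaledInvStereo p 0 ^ 2 + scaledInvStereo p 1 ^ 2 + scaledInvStereo p 2 ^ 2 = p 0 ^ 2 := by
  simp only [scaledInvStereo_apply]
  linear_combination p 0 ^ 2 * invStereo_sq_sum (p 1) (p 2)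

lemma abs_scaledInvStereo_two_lt {p : Fin 3 → K} (h0 : p 0 ≠ 0) (h1 : p 1 ≠ 0) :
    |scaledInvStereo p 2| < |p 0| := by
  have hden : 0 < 1 + p 1 ^ 2 + p 2 ^ 2 := by positivity
  have : 2 * |p 2| < 1 + p 1 ^ 2 + p 2 ^ 2 := by
    nlinarith [sq_nonneg (|p 2| - 1), sq_pos_of_ne_zero h1, sq_abs (p 2)]
  rw [scaledInvStereo_apply, abs_mul]
  simp only [invStereo, Matrix.cons_val]
  rw [abs_div, abs_of_pos hden, abs_mul, abs_two, mul_lt_iff_lt_one_right (abs_pos.2 h0),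
    div_lt_one hden]
  exact this

lemma scaledInvStereo_two_ne_zero {p : Fin 3 → K} (h0 : p 0 ≠ 0) (h2 : p 2 ≠ 0) :
    scaledInvStereo p 2 ≠ 0 := by
  have : 1 + p 1 ^ 2 + p 2 ^ 2 ≠ 0 := by positivity
  simp [scaledInvStereo_apply, invStereo, *]

end InvStereo

lemma continuous_scaledInvStereo :
    Continuous (scaledInvStereo : (Fin 3 → ℝ) → Fin 3 → ℝ) := by
  unfold scaledInvStereo invStereo
  fun_prop (disch := intro; positivity)

lemma scaledInvStereo_surjective :
    Function.Surjective (scaledInvStereo : (Fin 3 → ℝ) → Fin 3 → ℝ) := by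
  intro v
  rcases eq_or_ne v 0 with rfl | hv
  · exact ⟨0, by simp [scaledInvStereo]⟩
  have hsum : 0 < v 0 ^ 2 + v 1 ^ 2 + v 2 ^ 2 := by
    contrapose! hv
    ext i
    fin_cases i <;> simp <;> nlinarith [sq_nonneg (v 0), sq_nonneg (v 1), sq_nonneg (v 2)]
  set n := √(v 0 ^ 2 + v 1 ^ 2 + v 2 ^ 2)
  have hn : n ≠ 0 := (Real.sqrt_pos.2 hsum).ne'
  set u := n⁻¹ • v with hu_def
  have hv_eq : v = n • u := by rw [hu_def, smul_smul, mul_inv_cancel₀ hn, one_smul]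
  have hu : u 0 ^ 2 + u 1 ^ 2 + u 2 ^ 2 = 1 := by
    simp only [hu_def, Pi.smul_apply, smul_eq_mul, mul_pow, ← mul_add, inv_pow,
      Real.sq_sqrt hsum.le, n]
    exact inv_mul_cancel₀ hsum.ne'
  by_cases hpole : 1 + u 0 = 0
  · have hu0 : u 0 = -1 := by linarith
    have hu1 : u 1 = 0 := by nlinarith
    have hu2 : u 2 = 0 := by nlinarith
    refine ⟨![-n, 0, 0], ?_⟩
    rw [hv_eq]
    ext i
    fin_cases i <;> simp [scaledInvStereo, invStereo, hu0, hu1, hu2]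
  · exact ⟨![n, u 1 / (1 + u 0), u 2 / (1 + u 0)], by
      simp [scaledInvStereo, invStereo_of_sq_sum hu hpole, hv_eq]⟩

theorem stmt_18 :
    Dense {c : Fin 3 → ℝ |
      (∀ i, ∃ q : ℚ, c i = (q : ℝ)) ∧
      Real.sqrt ((c 0) ^ 2 + (c 1) ^ 2 + (c 2) ^ 2) > |c 2| ∧
      |c 2| > 0 ∧
      ∃ q : ℚ, c 2 / Real.sqrt ((c 0) ^ 2 + (c 1) ^ 2 + (c 2) ^ 2) = (q : ℝ)} := by
  have hD : Dense (univ.pi fun _ : Fin 3 => range ((↑) : ℚ → ℝ) \ {0}) :=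
    dense_pi _ fun _ _ => Rat.denseRange_cast.sdiff_singleton 0
  refine (scaledInvStereo_surjective.denseRange.dense_image continuous_scaledInvStereo hD).mono ?_
  rintro _ ⟨p, hp, rfl⟩
  simp only [mem_univ_pi, mem_sdiff, mem_range, mem_singleton_iff] at hp
  choose hq hp_ne using hp
  choose q hq using hq
  obtain rfl : p = fun i => (q i : ℝ) := funext fun i => (hq i).symm
  rw [mem_ofPred_eq, scaledInvStereo_sq_sum, Real.sqrt_sq_eq_abs]
  refine ⟨fun i => ⟨scaledInvStereo q i, by rw [← ratCast_scaledInvStereo]⟩,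
    abs_scaledInvStereo_two_lt (hp_ne 0) (hp_ne 1),
    abs_pos.2 (scaledInvStereo_two_ne_zero (hp_ne 0) (hp_ne 2)),
    scaledInvStereo q 2 / |q 0|, by simp [← ratCast_scaledInvStereo]⟩
end
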